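/- Let μ:[0,1]→P(X) be a constant speed geodesic in (P(X),W_ψ) and let η ∈ P(C([0,1];X)) represent μ in the sense of the superposition theorem (η concentrated on AC^ψ curves, (e_t)_#η=μ_t, and |μ'|(t)=‖|u'|(t)‖_{L^ψ_η} a.e.). Then γ_{s,t}:=(e_s,e_t)_#η is an optimal plan for W_ψ(μ_s,μ_t) for every s,t ∈ [0,1]. -/

import Mathlib

open MeasureTheory Filter Set ENNReal NNReal Topology

noncomputable section

/-- Luxemburg (Orlicz) norm of a nonnegative function. -/
def luxNorm (ψ : ℝ≥0∞ → ℝ≥0∞) {Ω : Type*} [MeasurableSpace Ω]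
    (ν : Measure Ω) (u : Ω → ℝ≥0∞) : ℝ≥0∞ :=
  sInf {l : ℝ≥0∞ | 0 < l ∧ ∫⁻ x, ψ (u x / l) ∂ν ≤ 1}

/-- Standard assumptions on the Orlicz function `ψ`: convex, lower semicontinuous,
non-decreasing, `ψ 0 = 0`, `ψ x → ∞` as `x → ∞`. -/
structure IsOrlicz (ψ : ℝ≥0∞ → ℝ≥0∞) : Prop where
  convex : ∀ a b x y : ℝ≥0∞, a + b = 1 → ψ (a * x + b * y) ≤ a * ψ x + b * ψ y
  lsc : LowerSemicontinuous ψ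
  mono : Monotone ψ
  zero : ψ 0 = 0
  tendsto_top : ∀ C : ℝ≥0∞, ∃ M : ℝ≥0∞, ∀ x, M ≤ x → C ≤ ψ x

/-- Superlinearity at infinity: `ψ x / x → ∞`. -/
def Superlinear (ψ : ℝ≥0∞ → ℝ≥0∞) : Prop :=
  ∀ C : ℝ≥0, ∃ M : ℝ≥0, ∀ x : ℝ≥0, M ≤ x → (C : ℝ≥0∞) * x ≤ ψ x

/-- Null right derivative at `0`: `ψ x / x → 0` as `x → 0⁺`. -/
def FlatAtZero (ψ : ℝ≥0∞ → ℝ≥0∞) : Prop :=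
  ∀ ε : ℝ≥0, 0 < ε → ∃ δ : ℝ≥0, 0 < δ ∧ ∀ x : ℝ≥0, 0 < x → x ≤ δ → ψ x ≤ (ε : ℝ≥0∞) * x

/-- Legendre conjugate `ψ*(y) = sup_{x ≥ 0} (x y - ψ x)`. -/
def conjOrlicz (ψ : ℝ≥0∞ → ℝ≥0∞) (y : ℝ≥0∞) : ℝ≥0∞ :=
  ⨆ x : ℝ≥0, (x : ℝ≥0∞) * y - ψ x

/-- Generalized inverse of `ψ` (with the convention of the paper). -/
def psiInv (ψ : ℝ≥0∞ → ℝ≥0∞) (s : ℝ≥0∞) : ℝ≥0∞ :=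
  sSup {r : ℝ≥0∞ | ψ r ≤ s}

/-- `(X, τ, d)` is an extended Polish space: `d` is an extended distance, complete,
`d`-convergence implies `τ`-convergence, and `d` is `τ × τ` lower semicontinuous. -/
structure IsExtPolish (X : Type*) [TopologicalSpace X] (d : X → X → ℝ≥0∞) : Prop where
  symm : ∀ x y, d x y = d y x
  eq_zero_iff : ∀ x y, d x y = 0 ↔ x = y
  triangle : ∀ x y z, d x z ≤ d x y + d y z
  complete : ∀ u : ℕ → X,
    (∀ ε : ℝ≥0∞, 0 < ε → ∃ N, ∀ m n, N ≤ m → N ≤ n → d (u m) (u n) < ε) →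
    ∃ x, Tendsto (fun n => d (u n) x) atTop (𝓝 0)
  compat : ∀ (u : ℕ → X) (x : X),
    Tendsto (fun n => d (u n) x) atTop (𝓝 0) → Tendsto u atTop (𝓝 x)
  lsc : LowerSemicontinuous fun p : X × X => d p.1 p.2

/-- Admissible transport plans between `μ` and `ν`. -/
def Couplings {X : Type*} [MeasurableSpace X] (μ ν : Measure X) : Set (Measure (X × X)) :=
  {γ | IsProbabilityMeasure γ ∧ γ.map Prod.fst = μ ∧ γ.map Prod.snd = ν}

/-- The Wasserstein–Orlicz extended distance. -/
def Wass (ψ : ℝ≥0∞ → ℝ≥0∞) {X : Type*} [MeasurableSpace X] (d : X → X → ℝ≥0∞)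
    (μ ν : Measure X) : ℝ≥0∞ :=
  ⨅ γ ∈ Couplings μ ν, luxNorm ψ γ (fun p : X × X => d p.1 p.2)

/-- Absolutely continuous curve with finite `L^ψ` energy with respect to the
extended distance `ρ`, on the interval `[a, b]`. -/
def IsACpsi (ψ : ℝ≥0∞ → ℝ≥0∞) {A : Type*} (ρ : A → A → ℝ≥0∞)
    (a b : ℝ) (u : ℝ → A) : Prop :=
  ∃ m : ℝ → ℝ≥0∞, luxNorm ψ (volume.restrict (Set.Icc a b)) m < ⊤ ∧
    ∀ s t : ℝ, a ≤ s → s ≤ t → t ≤ b → ρ (u s) (u t) ≤ ∫⁻ r in Set.Icc s t, m r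

/-- The metric derivative of the curve `u` (with values in a space with extended
distance `ρ`) at time `t` within the interval `I` equals `L`. -/
def HasMDeriv {A : Type*} (ρ : A → A → ℝ≥0∞) (u : ℝ → A) (I : Set ℝ) (t : ℝ)
    (L : ℝ≥0∞) : Prop :=
  Tendsto (fun h : ℝ => ρ (u (t + h)) (u t) / ENNReal.ofReal |h|)
    (𝓝[{h : ℝ | h ≠ 0 ∧ t + h ∈ I}] 0) (𝓝 L)

/-- The support of a Borel measure. -/
def measSupport {Y : Type*} [TopologicalSpace Y] [MeasurableSpace Y] (μ : Measure Y) : Set Y :=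
  {y | ∀ U ∈ 𝓝 y, 0 < μ U}

/-! The plan `(e_s, e_t)_# η` is admissible, so only `cost ≤ W_ψ(μ_s, μ_t)` needs proof, and by
symmetry we may take `s < t`. Along `η`-a.e. curve `d(u_s, u_t) ≤ ∫_s^t |u'|(r) dr`: this is the
fundamental theorem of calculus for the absolutely continuous function `r ↦ d(u_s, u_r)`. By
Jensen's inequality on `[s, t]` and Tonelli, the modular of `d(u_s, u_t) / ((t - s) c)` is then at
most the average over `r ∈ [s, t]` of the modular of `|u'|(r) / c`, which is `≤ 1` whenever
`c > W_ψ(μ_0, μ_1)`, because `‖|u'|(r)‖_{L^ψ_η} = |μ'|(r) = W_ψ(μ_0, μ_1)` for a.e. `r`. Hence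
the cost is at most `(t - s) W_ψ(μ_0, μ_1) = W_ψ(μ_s, μ_t)`. -/

lemma Monotone.map_iSup_of_lowerSemicontinuous {f : ℝ≥0∞ → ℝ≥0∞} (hf : Monotone f)
    (hlsc : LowerSemicontinuous f) {x : ℕ → ℝ≥0∞} (hx : Monotone x) :
    f (⨆ n, x n) = ⨆ n, f (x n) := by
  refine le_antisymm ?_ (iSup_le fun n => hf (le_iSup x n))
  by_contra! hlt
  obtain ⟨n, hn⟩ := ((tendsto_atTop_iSup hx).eventually (hlsc _ _ hlt)).exists
  exact hn.not_ge (le_iSup (fun n => f (x n)) n)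

namespace IsOrlicz

variable {ψ : ℝ≥0∞ → ℝ≥0∞}

lemma measurable (hψ : IsOrlicz ψ) : Measurable ψ :=
  hψ.mono.measurable

lemma map_sum_le (hψ : IsOrlicz ψ) {ι : Type*} (F : Finset ι) {w : ι → ℝ≥0∞}
    (hw : ∑ i ∈ F, w i = 1) (x : ι → ℝ≥0∞) :
    ψ (∑ i ∈ F, w i * x i) ≤ ∑ i ∈ F, w i * ψ (x i) := by
  induction F using Finset.cons_induction generalizing w with
  | empty => simp at hw
  | cons a F ha ih =>
    rw [Finset.sum_cons] at hw ⊢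
    rw [Finset.sum_cons]
    set b := ∑ i ∈ F, w i
    rcases eq_or_ne b 0 with hb | hb
    · have hF : ∀ i ∈ F, w i = 0 := Finset.sum_eq_zero_iff.mp hb
      have h0 : ∀ y : ι → ℝ≥0∞, ∑ i ∈ F, w i * y i = 0 := fun y =>
        Finset.sum_eq_zero fun i hi => by rw [hF i hi, zero_mul]
      rw [hb, add_zero] at hw
      simp [h0, hw]
    have hbt : b ≠ ⊤ := ne_top_of_le_ne_top one_ne_top (hw ▸ le_add_self)
    have hscale : ∀ y : ι → ℝ≥0∞, ∑ i ∈ F, w i * y i = b * ∑ i ∈ F, w i * b⁻¹ * y i := by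
      intro y
      rw [Finset.mul_sum]
      refine Finset.sum_congr rfl fun i _ => ?_
      rw [show b * (w i * b⁻¹ * y i) = b * b⁻¹ * (w i * y i) by ring,
        ENNReal.mul_inv_cancel hb hbt, one_mul]
    have hw' : ∑ i ∈ F, w i * b⁻¹ = 1 := by
      rw [← Finset.sum_mul, ENNReal.mul_inv_cancel hb hbt]
    calc ψ (w a * x a + ∑ i ∈ F, w i * x i)
        = ψ (w a * x a + b * ∑ i ∈ F, w i * b⁻¹ * x i) := by rw [hscale]
      _ ≤ w a * ψ (x a) + b * ψ (∑ i ∈ F, w i * b⁻¹ * x i) := hψ.convex _ _ _ _ hw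
      _ ≤ w a * ψ (x a) + b * ∑ i ∈ F, w i * b⁻¹ * ψ (x i) := by gcongr; exact ih hw'
      _ = w a * ψ (x a) + ∑ i ∈ F, w i * ψ (x i) := by rw [hscale]

lemma map_lintegral_le (hψ : IsOrlicz ψ) {Ω : Type*} [MeasurableSpace Ω] (ν : Measure Ω)
    [IsProbabilityMeasure ν] {f : Ω → ℝ≥0∞} (hf : Measurable f) :
    ψ (∫⁻ x, f x ∂ν) ≤ ∫⁻ x, ψ (f x) ∂ν := by
  have hmono : Monotone fun n => (SimpleFunc.eapprox f n).lintegral ν := fun i j hij =>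
    SimpleFunc.lintegral_mono (SimpleFunc.monotone_eapprox f hij) le_rfl
  rw [lintegral_eq_iSup_eapprox_lintegral hf, hψ.mono.map_iSup_of_lowerSemicontinuous hψ.lsc hmono]
  refine iSup_le fun n => ?_
  set g := SimpleFunc.eapprox f n
  have hw : ∑ y ∈ g.range, ν (g ⁻¹' {y}) = 1 := by
    rw [SimpleFunc.sum_measure_preimage_singleton, ← measure_univ (μ := ν)]
    congr 1
    ext a
    simp
  calc ψ (g.lintegral ν) = ψ (∑ y ∈ g.range, ν (g ⁻¹' {y}) * y) := by
        simp only [SimpleFunc.lintegral, mul_comm]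
    _ ≤ ∑ y ∈ g.range, ν (g ⁻¹' {y}) * ψ y := hψ.map_sum_le _ hw id
    _ = ∫⁻ x, ψ (g x) ∂ν := by
        rw [← Function.comp_def ψ g, ← SimpleFunc.coe_map, SimpleFunc.lintegral_eq_lintegral,
          SimpleFunc.map_lintegral]
        simp only [mul_comm]
    _ ≤ ∫⁻ x, ψ (f x) ∂ν :=
        lintegral_mono fun x => hψ.mono
          ((le_iSup (fun k => SimpleFunc.eapprox f k x) n).trans
            (SimpleFunc.iSup_eapprox_apply hf x).le)

end IsOrlicz

section LuxemburgNorm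

variable {ψ : ℝ≥0∞ → ℝ≥0∞} {Ω : Type*} [MeasurableSpace Ω] {ν : Measure Ω} {u v : Ω → ℝ≥0∞}

lemma luxNorm_congr_ae (h : u =ᵐ[ν] v) : luxNorm ψ ν u = luxNorm ψ ν v := by
  unfold luxNorm
  congr 1
  ext l
  rw [mem_ofPred_eq, mem_ofPred_eq, lintegral_congr_ae (h.mono fun x hx => by rw [hx])]

lemma lintegral_le_one_of_luxNorm_lt (hψ : Monotone ψ) {c : ℝ≥0∞} (hc : luxNorm ψ ν u < c) :
    ∫⁻ x, ψ (u x / c) ∂ν ≤ 1 := by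
  obtain ⟨l, ⟨-, hl⟩, hlc⟩ := sInf_lt_iff.mp hc
  exact (lintegral_mono fun x => hψ (ENNReal.div_le_div_left hlc.le _)).trans hl

lemma luxNorm_le_of_lintegral_le_one {c : ℝ≥0∞} (hc : 0 < c) (h : ∫⁻ x, ψ (u x / c) ∂ν ≤ 1) :
    luxNorm ψ ν u ≤ c :=
  sInf_le ⟨hc, h⟩

lemma luxNorm_zero (hψ : ψ 0 = 0) : luxNorm ψ ν (fun _ => 0) = 0 :=
  nonpos_iff_eq_zero.mp <| le_of_forall_gt_imp_ge_of_dense fun _ hc =>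
    luxNorm_le_of_lintegral_le_one hc (by simp [hψ])

lemma luxNorm_map (hψ : Measurable ψ) {Ω' : Type*} [MeasurableSpace Ω'] {f : Ω → Ω'}
    (hf : Measurable f) {g : Ω' → ℝ≥0∞} (hg : Measurable g) :
    luxNorm ψ (ν.map f) g = luxNorm ψ ν (fun x => g (f x)) := by
  unfold luxNorm
  congr 1
  ext l
  rw [mem_ofPred_eq, mem_ofPred_eq,
    lintegral_map (f := fun y => ψ (g y / l)) (hψ.comp (hg.div_const l)) hf]

lemma luxNorm_le_of_le_lintegral (hψ : IsOrlicz ψ) [SFinite ν] {Y : Type*} [MeasurableSpace Y]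
    {ρ : Measure Y} [IsFiniteMeasure ρ] (hρ : ρ ≠ 0) {F : Ω × Y → ℝ≥0∞} (hF : Measurable F)
    {K : ℝ≥0∞} (hu : ∀ᵐ x ∂ν, u x ≤ ∫⁻ y, F (x, y) ∂ρ)
    (hK : ∀ᵐ y ∂ρ, luxNorm ψ ν (fun x => F (x, y)) ≤ K) :
    luxNorm ψ ν u ≤ ρ univ * K := by
  set T := ρ univ
  have hT0 : T ≠ 0 := Measure.measure_univ_ne_zero.mpr hρ
  have hT : T ≠ ⊤ := measure_ne_top ρ univ
  set P : Measure Y := T⁻¹ • ρ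
  have : IsProbabilityMeasure P := ⟨by simp [P, T, ENNReal.inv_mul_cancel hT0 hT]⟩
  rw [mul_comm, ← ENNReal.div_le_iff hT0 hT]
  refine le_of_forall_gt_imp_ge_of_dense fun c hKc => ?_
  rcases eq_or_ne c ⊤ with rfl | hc
  · exact le_top
  have hc0 : c ≠ 0 := (hKc.trans_le' bot_le).ne'
  rw [ENNReal.div_le_iff hT0 hT, mul_comm]
  refine luxNorm_le_of_lintegral_le_one (ENNReal.mul_pos hT0 hc0) ?_
  have hjensen : ∀ᵐ x ∂ν, ψ (u x / (T * c)) ≤ ∫⁻ y, ψ (F (x, y) / c) ∂P := by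
    filter_upwards [hu] with x hx
    refine (hψ.mono ?_).trans (hψ.map_lintegral_le P ((hF.comp measurable_prodMk_left).div_const c))
    simp only [P, lintegral_smul_measure, div_eq_mul_inv, ENNReal.mul_inv (Or.inl hT0) (Or.inl hT),
      lintegral_mul_const' _ _ (ENNReal.inv_ne_top.mpr hc0)]
    calc u x * (T⁻¹ * c⁻¹) ≤ (∫⁻ y, F (x, y) ∂ρ) * (T⁻¹ * c⁻¹) := by gcongr
      _ = (T⁻¹ • ∫⁻ y, F (x, y) ∂ρ) * c⁻¹ := by rw [smul_eq_mul]; ring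
  have hslice : ∀ᵐ y ∂P, ∫⁻ x, ψ (F (x, y) / c) ∂ν ≤ 1 :=
    Measure.ae_smul_measure (hK.mono fun y hy =>
      lintegral_le_one_of_luxNorm_lt hψ.mono (hy.trans_lt hKc)) _
  calc ∫⁻ x, ψ (u x / (T * c)) ∂ν ≤ ∫⁻ x, ∫⁻ y, ψ (F (x, y) / c) ∂P ∂ν := lintegral_mono_ae hjensen
    _ = ∫⁻ y, ∫⁻ x, ψ (F (x, y) / c) ∂ν ∂P :=
        lintegral_lintegral_swap (hψ.measurable.comp (hF.div_const c)).aemeasurable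
    _ ≤ ∫⁻ _, 1 ∂P := lintegral_mono_ae hslice
    _ = 1 := by simp

end LuxemburgNorm

lemma map_prodMk_mem_couplings {Ω X : Type*} [MeasurableSpace Ω] [MeasurableSpace X]
    {η : Measure Ω} [IsProbabilityMeasure η] {f g : Ω → X} (hf : Measurable f)
    (hg : Measurable g) :
    η.map (fun x => (f x, g x)) ∈ Couplings (η.map f) (η.map g) :=
  ⟨Measure.isProbabilityMeasure_map (hf.prodMk hg).aemeasurable,
    by rw [Measure.map_map measurable_fst (hf.prodMk hg)]; rfl,
    by rw [Measure.map_map measurable_snd (hf.prodMk hg)]; rfl⟩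

lemma Superlinear.exists_le_add {ψ : ℝ≥0∞ → ℝ≥0∞} (hsl : Superlinear ψ) (hψ : Monotone ψ) :
    ∃ M : ℝ≥0, ∀ x, x ≤ M + ψ x := by
  obtain ⟨M, hM⟩ := hsl 1
  have hM' : ∀ x : ℝ≥0, M ≤ x → (x : ℝ≥0∞) ≤ ψ x := fun x hx => by simpa using hM x hx
  refine ⟨M, fun x => ?_⟩
  induction x with
  | top =>
    have : ψ ⊤ = ⊤ := eq_top_of_forall_nnreal_le fun r =>
      calc (r : ℝ≥0∞) ≤ (r ⊔ M : ℝ≥0) := by exact_mod_cast le_sup_left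
        _ ≤ ψ (r ⊔ M : ℝ≥0) := hM' _ le_sup_right
        _ ≤ ψ ⊤ := hψ le_top
    simp [this]
  | coe x =>
    rcases le_total x M with h | h
    · exact le_add_right (by exact_mod_cast h)
    · exact (hM' x h).trans le_add_self

lemma lintegral_lt_top_of_luxNorm_lt_top {ψ : ℝ≥0∞ → ℝ≥0∞} (hψ : Monotone ψ)
    (hsl : Superlinear ψ) {Ω : Type*} [MeasurableSpace Ω] {ν : Measure Ω} [IsFiniteMeasure ν]
    {u : Ω → ℝ≥0∞} (h : luxNorm ψ ν u < ⊤) : ∫⁻ x, u x ∂ν < ⊤ := by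
  obtain ⟨M, hM⟩ := hsl.exists_le_add hψ
  obtain ⟨l, ⟨hl0, hl⟩, hlt⟩ := sInf_lt_iff.mp h
  calc ∫⁻ x, u x ∂ν = ∫⁻ x, l * (u x / l) ∂ν := by
        simp_rw [ENNReal.mul_div_cancel hl0.ne' hlt.ne]
    _ ≤ ∫⁻ x, l * (M + ψ (u x / l)) ∂ν := lintegral_mono fun x => by gcongr; exact hM _
    _ = l * (M * ν univ + ∫⁻ x, ψ (u x / l) ∂ν) := by
        rw [lintegral_const_mul' _ _ hlt.ne, lintegral_add_left measurable_const, lintegral_const]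
    _ < ⊤ := ENNReal.mul_lt_top hlt (ENNReal.add_lt_top.mpr
        ⟨ENNReal.mul_lt_top ENNReal.coe_lt_top (measure_lt_top ν univ), hl.trans_lt one_lt_top⟩)

lemma ENNReal.ofReal_natCast_add_one (n : ℕ) : ENNReal.ofReal ((n : ℝ) + 1) = (n : ℝ≥0∞) + 1 := by
  exact_mod_cast ENNReal.ofReal_natCast (n + 1)

lemma eventually_add_one_div_le {r b : ℝ} (h : r < b) :
    ∀ᶠ n : ℕ in atTop, r + 1 / ((n : ℝ) + 1) ≤ b :=
  (tendsto_one_div_add_atTop_nhds_zero_nat.eventually (gt_mem_nhds (sub_pos.mpr h))).mono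
    fun n hn => by linarith

lemma ofReal_integral_le_lintegral_ofReal {α : Type*} [MeasurableSpace α] {μ : Measure α}
    (f : α → ℝ) : ENNReal.ofReal (∫ x, f x ∂μ) ≤ ∫⁻ x, ENNReal.ofReal (f x) ∂μ := by
  by_cases hf : Integrable f μ
  · rw [integral_eq_lintegral_pos_part_sub_lintegral_neg_part hf]
    exact (ENNReal.ofReal_le_ofReal (sub_le_self _ ENNReal.toReal_nonneg)).trans ofReal_toReal_le
  · simp [integral_undef hf]

lemma ofReal_deriv_le_liminf {φ : ℝ → ℝ} {r : ℝ} {δ : ℕ → ℝ≥0∞}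
    (hδ : ∀ᶠ n : ℕ in atTop, ENNReal.ofReal (φ (r + 1 / ((n : ℝ) + 1)) - φ r) ≤ δ n) :
    ENNReal.ofReal (deriv φ r) ≤ liminf (fun n : ℕ => ((n : ℝ≥0∞) + 1) * δ n) atTop := by
  by_cases hφ : DifferentiableAt ℝ φ r
  swap
  · simp [deriv_zero_of_not_differentiableAt hφ]
  have hseq : Tendsto (fun n : ℕ => 1 / ((n : ℝ) + 1)) atTop (𝓝[≠] 0) :=
    tendsto_nhdsWithin_iff.mpr ⟨tendsto_one_div_add_atTop_nhds_zero_nat,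
      Eventually.of_forall fun n => (by positivity : (1 : ℝ) / ((n : ℝ) + 1) ≠ 0)⟩
  rw [← (ENNReal.tendsto_ofReal
    ((hasDerivAt_iff_tendsto_slope_zero.mp hφ.hasDerivAt).comp hseq)).liminf_eq]
  refine liminf_le_liminf (hδ.mono fun n hn => ?_)
  simp only [Function.comp_apply, smul_eq_mul, one_div, inv_inv] at hn ⊢
  rw [ENNReal.ofReal_mul (by positivity), ENNReal.ofReal_natCast_add_one]
  gcongr

lemma AbsolutelyContinuousOnInterval.of_dist_le {X Y : Type*} [PseudoMetricSpace X]
    [PseudoMetricSpace Y] {f : ℝ → X} {g : ℝ → Y} {a b : ℝ}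
    (hg : AbsolutelyContinuousOnInterval g a b)
    (h : ∀ x ∈ uIcc a b, ∀ y ∈ uIcc a b, dist (f x) (f y) ≤ dist (g x) (g y)) :
    AbsolutelyContinuousOnInterval f a b := by
  refine squeeze_zero' (Eventually.of_forall fun E => Finset.sum_nonneg fun _ _ => dist_nonneg)
    ?_ hg
  filter_upwards [eventually_inf_principal.mpr (Eventually.of_forall fun E hE => hE)] with E hE
  exact Finset.sum_le_sum fun i hi => h _ (hE.1 i hi).1 _ (hE.1 i hi).2

lemma exists_absolutelyContinuousOnInterval_measure_Icc {μ : Measure ℝ} [IsFiniteMeasure μ]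
    (hμ : μ ≪ volume) (a b : ℝ) :
    ∃ G : ℝ → ℝ, AbsolutelyContinuousOnInterval G a b ∧
      ∀ x y, x ≤ y → μ (Icc x y) = ENNReal.ofReal (G y - G x) := by
  set g := μ.rnDeriv volume
  have hg : Measurable g := Measure.measurable_rnDeriv _ _
  have hint : Integrable fun r => (g r).toReal :=
    integrable_toReal_of_lintegral_ne_top hg.aemeasurable
      (by rw [Measure.lintegral_rnDeriv hμ]; exact measure_ne_top μ univ)
  refine ⟨fun x => ∫ r in a..x, (g r).toReal,
    hint.intervalIntegrable.absolutelyContinuousOnInterval_intervalIntegral left_mem_uIcc,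
    fun x y hxy => ?_⟩
  rw [intervalIntegral.integral_interval_sub_left hint.intervalIntegrable hint.intervalIntegrable,
    intervalIntegral.integral_of_le hxy,
    integral_toReal hg.aemeasurable.restrict (ae_restrict_of_ae (Measure.rnDeriv_lt_top _ _)),
    Measure.setLIntegral_rnDeriv hμ, ofReal_toReal (measure_ne_top μ _)]
  exact measure_congr (hμ.ae_eq Ioc_ae_eq_Icc).symm

section Curves

variable {A : Type*} {d : A → A → ℝ≥0∞}

lemma abs_toReal_sub_toReal_le (hsymm : ∀ x y, d x y = d y x)
    (htri : ∀ x y z, d x z ≤ d x y + d y z) {x y z : A} (hx : d z x ≠ ⊤) (hy : d z y ≠ ⊤) :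
    |(d z y).toReal - (d z x).toReal| ≤ (d x y).toReal := by
  have hxy : d x y ≠ ⊤ :=
    ne_top_of_le_ne_top (by rw [hsymm x z]; finiteness) (htri x z y)
  have key : ∀ a b, d z a ≠ ⊤ → d a b ≠ ⊤ → (d z b).toReal ≤ (d z a).toReal + (d a b).toReal :=
    fun a b ha hab => (ENNReal.toReal_mono (by finiteness) (htri z a b)).trans ENNReal.toReal_add_le
  rw [abs_sub_le_iff]
  constructor
  · linarith [key x y hx hxy]
  · have := key y x hy (by rwa [hsymm])
    rw [hsymm y x] at this
    linarith

lemma tendsto_dist_of_tendsto_dist_zero (hsymm : ∀ x y, d x y = d y x)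
    (htri : ∀ x y z, d x z ≤ d x y + d y z) {ι : Type*} {l : Filter ι} {x y : A} {x' y' : ι → A}
    (hx : Tendsto (fun i => d x (x' i)) l (𝓝 0)) (hy : Tendsto (fun i => d y (y' i)) l (𝓝 0)) :
    Tendsto (fun i => d (x' i) (y' i)) l (𝓝 (d x y)) := by
  refine tendsto_of_tendsto_of_tendsto_of_le_of_le
    (g := fun i => d x y - (d x (x' i) + d y (y' i)))
    (h := fun i => d x (x' i) + d x y + d y (y' i)) ?_ ?_ (fun i => ?_) (fun i => ?_)
  · simpa using ENNReal.Tendsto.sub tendsto_const_nhds (hx.add hy) (Or.inr (by simp))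
  · simpa using (hx.add tendsto_const_nhds).add hy
  · rw [tsub_le_iff_right]
    calc d x y ≤ d x (x' i) + (d (x' i) (y' i) + d (y' i) y) :=
          (htri _ _ _).trans (by gcongr; exact htri _ _ _)
      _ = d (x' i) (y' i) + (d x (x' i) + d y (y' i)) := by rw [hsymm (y' i) y]; ring
  · calc d (x' i) (y' i) ≤ d (x' i) x + (d x y + d y (y' i)) :=
          (htri _ _ _).trans (by gcongr; exact htri _ _ _)
      _ = d x (x' i) + d x y + d y (y' i) := by rw [hsymm (x' i) x, add_assoc]

def IsControlledBy (d : A → A → ℝ≥0∞) (u : ℝ → A) (G : ℝ → ℝ) (a b : ℝ) : Prop :=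
  ∀ x y, a ≤ x → x ≤ y → y ≤ b → d (u x) (u y) ≤ ENNReal.ofReal (G y - G x)

def forwardSpeed (d : A → A → ℝ≥0∞) (u : ℝ → A) (r : ℝ) : ℝ≥0∞ :=
  liminf (fun n : ℕ => ((n : ℝ≥0∞) + 1) * d (u r) (u (r + 1 / ((n : ℝ) + 1)))) atTop

variable {u : ℝ → A} {G : ℝ → ℝ} {a b : ℝ}

lemma IsControlledBy.mono (hu : IsControlledBy d u G a b) {s t : ℝ} (has : a ≤ s) (htb : t ≤ b) :
    IsControlledBy d u G s t :=
  fun x y hx hxy hy => hu x y (has.trans hx) hxy (hy.trans htb)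

lemma IsACpsi.exists_absolutelyContinuousOnInterval_isControlledBy {ψ : ℝ≥0∞ → ℝ≥0∞}
    (hψ : Monotone ψ) (hsl : Superlinear ψ) (hu : IsACpsi ψ d a b u) :
    ∃ G : ℝ → ℝ, AbsolutelyContinuousOnInterval G a b ∧ IsControlledBy d u G a b := by
  obtain ⟨m, hm, hmaj⟩ := hu
  -- `withDensity` does not need `m` to be measurable
  set μm := (volume.restrict (Icc a b)).withDensity m
  have : IsFiniteMeasure μm := ⟨by
    simpa [μm] using lintegral_lt_top_of_luxNorm_lt_top hψ hsl hm⟩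
  obtain ⟨G, hG, hGμ⟩ := exists_absolutelyContinuousOnInterval_measure_Icc (μ := μm)
    ((withDensity_absolutelyContinuous _ m).trans
      (Measure.absolutelyContinuous_of_le Measure.restrict_le_self)) a b
  refine ⟨G, hG, fun x y hax hxy hyb => ?_⟩
  rw [← hGμ x y hxy, withDensity_apply _ measurableSet_Icc,
    Measure.restrict_restrict measurableSet_Icc, inter_eq_left.mpr (Icc_subset_Icc hax hyb)]
  exact hmaj x y hax hxy hyb

lemma IsControlledBy.dist_le_lintegral_forwardSpeed (hsymm : ∀ x y, d x y = d y x)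
    (htri : ∀ x y z, d x z ≤ d x y + d y z) {s t : ℝ} (hu : IsControlledBy d u G s t)
    (hG : AbsolutelyContinuousOnInterval G s t) (hst : s ≤ t) :
    d (u s) (u t) ≤ ∫⁻ r in Icc s t, forwardSpeed d u r := by
  set φ : ℝ → ℝ := fun r => (d (u s) (u r)).toReal
  have hfin : ∀ r ∈ Icc s t, d (u s) (u r) ≠ ⊤ := fun r hr =>
    ne_top_of_le_ne_top ofReal_ne_top (hu s r le_rfl hr.1 hr.2)
  have hφ : ∀ x ∈ Icc s t, ∀ y ∈ Icc s t, |φ y - φ x| ≤ (d (u x) (u y)).toReal :=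
    fun x hx y hy => abs_toReal_sub_toReal_le hsymm htri (hfin x hx) (hfin y hy)
  have hφAC : AbsolutelyContinuousOnInterval φ s t := by
    refine hG.of_dist_le fun x hx y hy => ?_
    rw [uIcc_of_le hst] at hx hy
    wlog hxy : x ≤ y generalizing x y
    · rw [dist_comm, dist_comm (G x)]
      exact this y hy x hx (le_of_not_ge hxy)
    rw [Real.dist_eq, Real.dist_eq, abs_sub_comm, abs_sub_comm (G x)]
    calc |φ y - φ x| ≤ (d (u x) (u y)).toReal := hφ x hx y hy
      _ ≤ (ENNReal.ofReal (G y - G x)).toReal :=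
          ENNReal.toReal_mono ofReal_ne_top (hu x y hx.1 hxy hy.2)
      _ ≤ |G y - G x| := by
          rw [ENNReal.toReal_ofReal']
          exact max_le (le_abs_self _) (abs_nonneg _)
  have hderiv : ∀ r ∈ Ioo s t, ENNReal.ofReal (deriv φ r) ≤ forwardSpeed d u r := by
    intro r hr
    refine ofReal_deriv_le_liminf ((eventually_add_one_div_le hr.2).mono fun n hn => ?_)
    have hn' : r + 1 / ((n : ℝ) + 1) ∈ Icc s t :=
      ⟨hr.1.le.trans (le_add_of_nonneg_right (by positivity)), hn⟩
    exact (ENNReal.ofReal_le_ofReal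
      ((le_abs_self _).trans (hφ r (Ioo_subset_Icc_self hr) _ hn'))).trans ofReal_toReal_le
  have hss : d (u s) (u s) = 0 := by simpa using hu s s le_rfl le_rfl hst
  calc d (u s) (u t) = ENNReal.ofReal (φ t - φ s) := by
        simp [φ, hss, ofReal_toReal (hfin t ⟨hst, le_rfl⟩)]
    _ = ENNReal.ofReal (∫ r in Ioo s t, deriv φ r) := by
        rw [← hφAC.integral_deriv_eq_sub, intervalIntegral.integral_of_le hst,
          integral_Ioc_eq_integral_Ioo]
    _ ≤ ∫⁻ r in Ioo s t, ENNReal.ofReal (deriv φ r) := ofReal_integral_le_lintegral_ofReal _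
    _ ≤ ∫⁻ r in Ioo s t, forwardSpeed d u r := setLIntegral_mono' measurableSet_Ioo hderiv
    _ ≤ ∫⁻ r in Icc s t, forwardSpeed d u r := lintegral_mono_set Ioo_subset_Icc_self

lemma HasMDeriv.forwardSpeed_eq (hsymm : ∀ x y, d x y = d y x) {I : Set ℝ} {r : ℝ} {L : ℝ≥0∞}
    (h : HasMDeriv d u I r L) (hI : ∀ᶠ n : ℕ in atTop, r + 1 / ((n : ℝ) + 1) ∈ I) :
    forwardSpeed d u r = L := by
  have hseq : Tendsto (fun n : ℕ => 1 / ((n : ℝ) + 1)) atTop (𝓝[{h | h ≠ 0 ∧ r + h ∈ I}] 0) :=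
    tendsto_nhdsWithin_iff.mpr ⟨tendsto_one_div_add_atTop_nhds_zero_nat,
      hI.mono fun n hn => ⟨by positivity, hn⟩⟩
  refine ((Tendsto.comp h hseq).congr fun n => ?_).liminf_eq
  have : ENNReal.ofReal |1 / ((n : ℝ) + 1)| = ((n : ℝ≥0∞) + 1)⁻¹ := by
    rw [abs_of_pos (by positivity), one_div, ENNReal.ofReal_inv_of_pos (by positivity),
      ENNReal.ofReal_natCast_add_one]
  simp only [Function.comp_apply]
  rw [this, ENNReal.div_eq_inv_mul, inv_inv, hsymm]

lemma hasMDeriv_of_dist_eq {c : ℝ → A} {I : Set ℝ} {K : ℝ≥0∞}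
    (h : ∀ s ∈ I, ∀ t ∈ I, d (c s) (c t) = ENNReal.ofReal |s - t| * K) {t : ℝ} (ht : t ∈ I) :
    HasMDeriv d c I t K :=
  tendsto_const_nhds.congr' <| eventually_nhdsWithin_of_forall fun x ⟨hx0, hxI⟩ => by
    dsimp only
    rw [h _ hxI _ ht, add_sub_cancel_left, mul_comm,
      ENNReal.mul_div_cancel_right (ENNReal.ofReal_pos.mpr (abs_pos.mpr hx0)).ne' ofReal_ne_top]

end Curves

section MeasurableSpeed

variable {A : Type*} {d : A → A → ℝ≥0∞}

def gridUp (k : ℕ) (r : ℝ) : ℝ := min 1 ((⌈r * (k + 1)⌉ : ℝ) / (k + 1))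

lemma le_gridUp (k : ℕ) {r : ℝ} (hr : r ≤ 1) : r ≤ gridUp k r :=
  le_min hr ((le_div_iff₀ (by positivity)).mpr (Int.le_ceil _))

lemma gridUp_le_one (k : ℕ) (r : ℝ) : gridUp k r ≤ 1 := min_le_left _ _

lemma gridUp_le_add (k : ℕ) (r : ℝ) : gridUp k r ≤ r + 1 / ((k : ℝ) + 1) := by
  refine (min_le_right _ _).trans ((div_le_iff₀ (by positivity)).mpr ?_)
  rw [add_mul, one_div_mul_cancel (by positivity)]
  exact (Int.ceil_lt_add_one _).le

lemma tendsto_gridUp {r : ℝ} (hr : r ≤ 1) : Tendsto (fun k => gridUp k r) atTop (𝓝 r) :=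
  tendsto_of_tendsto_of_tendsto_of_le_of_le tendsto_const_nhds
    (by simpa using tendsto_const_nhds.add (tendsto_one_div_add_atTop_nhds_zero_nat (𝕜 := ℝ)))
    (fun k => le_gridUp k hr) (fun k => gridUp_le_add k r)

lemma measurable_apply_gridUp [MeasurableSpace A] (k : ℕ) :
    Measurable fun p : (ℝ → A) × ℝ => p.1 (gridUp k p.2) := by
  have : Measurable fun q : (ℝ → A) × ℤ => q.1 (min 1 ((q.2 : ℝ) / (k + 1))) :=
    measurable_from_prod_countable_left fun _ => by dsimp only; exact measurable_pi_apply _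
  exact this.comp (measurable_fst.prodMk (Int.measurable_ceil.comp (measurable_snd.mul_const _)))

/-- A jointly measurable substitute for `forwardSpeed`, which is needed because evaluation
`(u, r) ↦ u r` is not measurable on `(ℝ → A) × ℝ`: times are rounded up to the grid
`ℤ / (k + 1)` before letting `k → ∞`. -/
def metricSpeed (d : A → A → ℝ≥0∞) (p : (ℝ → A) × ℝ) : ℝ≥0∞ :=
  liminf (fun n : ℕ => ((n : ℝ≥0∞) + 1) * liminf (fun k =>
    d (p.1 (gridUp k p.2)) (p.1 (gridUp k (p.2 + 1 / ((n : ℝ) + 1))))) atTop) atTop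

lemma measurable_metricSpeed [MeasurableSpace A] (hd : Measurable fun q : A × A => d q.1 q.2) :
    Measurable (metricSpeed d) :=
  Measurable.liminf fun _ => (Measurable.liminf fun k => hd.comp
    ((measurable_apply_gridUp k).prodMk ((measurable_apply_gridUp k).comp
      (measurable_fst.prodMk (measurable_snd.add_const _))))).const_mul _

variable {u : ℝ → A} {G : ℝ → ℝ}

lemma IsControlledBy.tendsto_dist_gridUp (hu : IsControlledBy d u G 0 1)
    (hG : ContinuousOn G (Icc 0 1)) {x : ℝ} (hx : x ∈ Icc (0 : ℝ) 1) :
    Tendsto (fun k => d (u x) (u (gridUp k x))) atTop (𝓝 0) := by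
  have hmem : ∀ k, gridUp k x ∈ Icc (0 : ℝ) 1 :=
    fun k => ⟨hx.1.trans (le_gridUp k hx.2), gridUp_le_one k x⟩
  have hGx : Tendsto (fun k => G (gridUp k x)) atTop (𝓝 (G x)) :=
    (hG x hx).tendsto.comp
      (tendsto_nhdsWithin_iff.mpr ⟨tendsto_gridUp hx.2, Eventually.of_forall hmem⟩)
  refine tendsto_of_tendsto_of_tendsto_of_le_of_le tendsto_const_nhds ?_ (fun _ => zero_le)
    (fun k => hu x _ hx.1 (le_gridUp k hx.2) (gridUp_le_one k x))
  simpa using ENNReal.tendsto_ofReal (hGx.sub_const (G x))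

lemma IsControlledBy.metricSpeed_eq_forwardSpeed (hsymm : ∀ x y, d x y = d y x)
    (htri : ∀ x y z, d x z ≤ d x y + d y z) (hu : IsControlledBy d u G 0 1)
    (hG : ContinuousOn G (Icc 0 1)) {r : ℝ} (hr : r ∈ Ico (0 : ℝ) 1) :
    metricSpeed d (u, r) = forwardSpeed d u r := by
  refine liminf_congr ((eventually_add_one_div_le hr.2).mono fun n hn => ?_)
  have hn' : r + 1 / ((n : ℝ) + 1) ∈ Icc (0 : ℝ) 1 := ⟨add_nonneg hr.1 (by positivity), hn⟩
  rw [(tendsto_dist_of_tendsto_dist_zero hsymm htri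
    (hu.tendsto_dist_gridUp hG (Ico_subset_Icc_self hr)) (hu.tendsto_dist_gridUp hG hn')).liminf_eq]

end MeasurableSpeed

section ACCurves

variable {A : Type*} {d : A → A → ℝ≥0∞} {ψ : ℝ≥0∞ → ℝ≥0∞} {u : ℝ → A}

lemma IsACpsi.dist_le_lintegral_metricSpeed (hsymm : ∀ x y, d x y = d y x)
    (htri : ∀ x y z, d x z ≤ d x y + d y z) (hψ : Monotone ψ) (hsl : Superlinear ψ)
    (hu : IsACpsi ψ d 0 1 u) {s t : ℝ} (hs : 0 ≤ s) (hst : s ≤ t) (ht : t ≤ 1) :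
    d (u s) (u t) ≤ ∫⁻ r in Icc s t, metricSpeed d (u, r) := by
  obtain ⟨G, hG, hGu⟩ := hu.exists_absolutelyContinuousOnInterval_isControlledBy hψ hsl
  have hGc : ContinuousOn G (Icc 0 1) := by
    simpa [uIcc_of_le zero_le_one] using hG.continuousOn
  have hsub : uIcc s t ⊆ uIcc 0 1 := by
    rw [uIcc_of_le hst, uIcc_of_le zero_le_one]
    exact Icc_subset_Icc hs ht
  calc d (u s) (u t) ≤ ∫⁻ r in Icc s t, forwardSpeed d u r :=
        (hGu.mono hs ht).dist_le_lintegral_forwardSpeed hsymm htri (hG.mono hsub) hst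
    _ = ∫⁻ r in Ico s t, metricSpeed d (u, r) := by
        rw [← setLIntegral_congr Ico_ae_eq_Icc]
        exact setLIntegral_congr_fun measurableSet_Ico fun r hr =>
          (hGu.metricSpeed_eq_forwardSpeed hsymm htri hGc ⟨hs.trans hr.1, hr.2.trans_le ht⟩).symm
    _ = ∫⁻ r in Icc s t, metricSpeed d (u, r) := setLIntegral_congr Ico_ae_eq_Icc

lemma IsACpsi.metricSpeed_eq (hsymm : ∀ x y, d x y = d y x)
    (htri : ∀ x y z, d x z ≤ d x y + d y z) (hψ : Monotone ψ) (hsl : Superlinear ψ)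
    (hu : IsACpsi ψ d 0 1 u) {r : ℝ} (hr : r ∈ Ico (0 : ℝ) 1) {L : ℝ≥0∞}
    (hder : HasMDeriv d u (Icc 0 1) r L) : metricSpeed d (u, r) = L := by
  obtain ⟨G, hG, hGu⟩ := hu.exists_absolutelyContinuousOnInterval_isControlledBy hψ hsl
  have hGc : ContinuousOn G (Icc 0 1) := by
    simpa [uIcc_of_le zero_le_one] using hG.continuousOn
  rw [hGu.metricSpeed_eq_forwardSpeed hsymm htri hGc hr]
  exact hder.forwardSpeed_eq hsymm
    ((eventually_add_one_div_le hr.2).mono fun n hn => ⟨add_nonneg hr.1 (by positivity), hn⟩)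

end ACCurves

theorem plans_optimal_of_geodesic_general {X : Type*} [TopologicalSpace X] [PolishSpace X]
    [MeasurableSpace X] [BorelSpace X]
    (d : X → X → ℝ≥0∞) (hX : IsExtPolish X d)
    (ψ : ℝ≥0∞ → ℝ≥0∞) (hψ : IsOrlicz ψ) (hsl : Superlinear ψ)
    (μ : ℝ → Measure X)
    (hgeo : ∀ s ∈ Icc (0 : ℝ) 1, ∀ t ∈ Icc (0 : ℝ) 1,
      Wass ψ d (μ s) (μ t) = ENNReal.ofReal |s - t| * Wass ψ d (μ 0) (μ 1))
    (η : Measure (ℝ → X)) (hη : IsProbabilityMeasure η)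
    (hAC : ∀ᵐ u ∂η, IsACpsi ψ d 0 1 u)
    (hmap : ∀ t ∈ Icc (0 : ℝ) 1, η.map (fun u => u t) = μ t)
    (D : (ℝ → X) → ℝ → ℝ≥0∞)
    (hD : ∀ᵐ t ∂(volume.restrict (Icc (0 : ℝ) 1)),
      (∀ᵐ u ∂η, HasMDeriv d u (Icc (0 : ℝ) 1) t (D u t)) ∧
      (∀ L : ℝ≥0∞, HasMDeriv (Wass ψ d) μ (Icc (0 : ℝ) 1) t L →
        L = luxNorm ψ η (fun u => D u t))) :
    ∀ s ∈ Icc (0 : ℝ) 1, ∀ t ∈ Icc (0 : ℝ) 1,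
      luxNorm ψ (η.map fun u => (u s, u t)) (fun p : X × X => d p.1 p.2) =
        Wass ψ d (μ s) (μ t) := by
  intro s hs t ht
  have hd : Measurable fun p : X × X => d p.1 p.2 := hX.lsc.measurable
  have hcoupling : η.map (fun u => (u s, u t)) ∈ Couplings (μ s) (μ t) := by
    simpa only [hmap s hs, hmap t ht] using
      map_prodMk_mem_couplings (η := η) (measurable_pi_apply s) (measurable_pi_apply t)
  refine le_antisymm ?_ (iInf₂_le _ hcoupling)
  rw [luxNorm_map hψ.measurable ((measurable_pi_apply s).prodMk (measurable_pi_apply t)) hd]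
  have hspeed : ∀ᵐ r ∂volume.restrict (Icc (0 : ℝ) 1),
      luxNorm ψ η (fun u => metricSpeed d (u, r)) = Wass ψ d (μ 0) (μ 1) := by
    filter_upwards [hD, ae_restrict_mem measurableSet_Icc,
      ae_restrict_of_ae (Measure.ae_ne volume 1)] with r ⟨hDu, hDμ⟩ hr hr1
    rw [hDμ _ (hasMDeriv_of_dist_eq hgeo hr)]
    refine luxNorm_congr_ae ?_
    filter_upwards [hDu, hAC] with u hu hac
    exact hac.metricSpeed_eq hX.symm hX.triangle hψ.mono hsl ⟨hr.1, hr.2.lt_of_ne hr1⟩ hu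
  have hupper : ∀ a ∈ Icc (0 : ℝ) 1, ∀ b ∈ Icc (0 : ℝ) 1, a < b →
      luxNorm ψ η (fun u => d (u a) (u b)) ≤ ENNReal.ofReal (b - a) * Wass ψ d (μ 0) (μ 1) := by
    intro a ha b hb hab
    have hρ : volume.restrict (Icc a b) ≠ 0 := by simp [hab]
    refine (luxNorm_le_of_le_lintegral hψ hρ (measurable_metricSpeed hd)
      (hAC.mono fun u hu => hu.dist_le_lintegral_metricSpeed hX.symm hX.triangle hψ.mono hsl
        ha.1 hab.le hb.2)
      ((ae_restrict_of_ae_restrict_of_subset (Icc_subset_Icc ha.1 hb.2) hspeed).mono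
        fun r hr => hr.le)).trans_eq (by simp)
  rcases lt_trichotomy s t with hst | rfl | hts
  · rw [hgeo s hs t ht, abs_of_neg (sub_neg.2 hst), neg_sub]
    exact hupper s hs t ht hst
  · simp [(hX.eq_zero_iff _ _).mpr, luxNorm_zero hψ.zero]
  · rw [hgeo s hs t ht, abs_of_pos (sub_pos.2 hts),
      show (fun u : ℝ → X => d (u s) (u t)) = fun u => d (u t) (u s) from
        funext fun u => hX.symm _ _]
    exact hupper t ht s hs hts

/-- Theorem 4.2, first part: for a constant speed geodesic `μ` in
`(P(X), W_ψ)` represented by `η`, every plan `(e_s, e_t)_# η` is optimal. -/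
theorem plans_optimal_of_geodesic {X : Type*} [TopologicalSpace X] [PolishSpace X]
    [MeasurableSpace X] [BorelSpace X]
    (d : X → X → ℝ≥0∞) (hX : IsExtPolish X d)
    (ψ : ℝ≥0∞ → ℝ≥0∞) (hψ : IsOrlicz ψ) (hsl : Superlinear ψ) (hfl : FlatAtZero ψ)
    (μ : ℝ → Measure X) (hprob : ∀ t, IsProbabilityMeasure (μ t))
    (hgeo : ∀ s ∈ Icc (0 : ℝ) 1, ∀ t ∈ Icc (0 : ℝ) 1,
      Wass ψ d (μ s) (μ t) = ENNReal.ofReal |s - t| * Wass ψ d (μ 0) (μ 1))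
    (η : Measure (ℝ → X)) (hη : IsProbabilityMeasure η)
    (hAC : ∀ᵐ u ∂η, IsACpsi ψ d 0 1 u)
    (hmap : ∀ t ∈ Icc (0 : ℝ) 1, η.map (fun u => u t) = μ t)
    (D : (ℝ → X) → ℝ → ℝ≥0∞)
    (hD : ∀ᵐ t ∂(volume.restrict (Icc (0 : ℝ) 1)),
      (∀ᵐ u ∂η, HasMDeriv d u (Icc (0 : ℝ) 1) t (D u t)) ∧
      (∀ L : ℝ≥0∞, HasMDeriv (Wass ψ d) μ (Icc (0 : ℝ) 1) t L →
        L = luxNorm ψ η (fun u => D u t))) :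
    ∀ s ∈ Icc (0 : ℝ) 1, ∀ t ∈ Icc (0 : ℝ) 1,
      luxNorm ψ (η.map fun u => (u s, u t)) (fun p : X × X => d p.1 p.2) =
        Wass ψ d (μ s) (μ t) :=
  plans_optimal_of_geodesic_general d hX ψ hψ hsl μ hgeo η hη hAC hmap D hD
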